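/- Reachability of all concurrent pairs via edge constraints: let e, f be conflicting events on variable x with pos(e) < pos(f), e and f PWR-concurrent, but (e,f) not among the recorded concurrent pairs Conc(x) produced by the first pass of the PWR algorithm. Then there exist events g1, ..., gn with edge constraints e ≺ g1 ≺ ... ≺ gn in E(x) such that (gn, f) ∈ Conc(x). -/

import Mathlib

inductive Op : Type
  | read (x : ℕ)
  | write (x : ℕ)
  | acquire (y : ℕ)
  | release (y : ℕ)
  deriving DecidableEq

structure Event : Type where
  tid : ℕ
  uid : ℕ
  op : Op
  deriving DecidableEq

def Event.isWrite (e : Event) : Prop := ∃ x, e.op = Op.write x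

def Event.isRead (e : Event) : Prop := ∃ x, e.op = Op.read x

def Event.accesses (e : Event) (x : ℕ) : Prop :=
  e.op = Op.read x ∨ e.op = Op.write x

/-- Position of an event in a trace (trace position). -/
def tracePos (T : List Event) (e : Event) : ℕ := List.idxOf e T

/-- Two events conflict: same variable, different threads, at least one write. -/
def Conflict (e f : Event) : Prop :=
  e.tid ≠ f.tid ∧ ∃ x, e.accesses x ∧ f.accesses x ∧ (e.isWrite ∨ f.isWrite)

/-- `w` is the last write (on some variable `x`) seen by the read `r` in `T`. -/
def LastWriteOf (T : List Event) (w r : Event) : Prop :=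
  w ∈ T ∧ r ∈ T ∧ ∃ x, w.op = Op.write x ∧ r.op = Op.read x ∧
    tracePos T w < tracePos T r ∧
    ∀ w' ∈ T, w'.op = Op.write x → tracePos T w' < tracePos T r →
      tracePos T w' ≤ tracePos T w

/-- `a`, `r` form a matching acquire/release pair on lock `y` (a critical section). -/
def IsCS (T : List Event) (y : ℕ) (a r : Event) : Prop :=
  a ∈ T ∧ r ∈ T ∧ a.op = Op.acquire y ∧ r.op = Op.release y ∧ a.tid = r.tid ∧
    tracePos T a < tracePos T r ∧
    ∀ e ∈ T, (e.op = Op.acquire y ∨ e.op = Op.release y) →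
      ¬ (tracePos T a < tracePos T e ∧ tracePos T e < tracePos T r)

/-- Event `e` belongs to the critical section on lock `y` given by `a`, `r`. -/
def InCS (T : List Event) (y : ℕ) (a r e : Event) : Prop :=
  IsCS T y a r ∧ e ∈ T ∧ e.tid = a.tid ∧
    tracePos T a ≤ tracePos T e ∧ tracePos T e ≤ tracePos T r

/-- The lockset of an event: the locks of all critical sections containing it. -/
def Lockset (T : List Event) (e : Event) : Set ℕ := {y | ∃ a r, InCS T y a r e}

/-- Well-formedness of a trace: events are distinct, every release has a matching
acquire, and two acquires on the same lock are separated by a release. -/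
def WellFormed (T : List Event) : Prop :=
  T.Nodup ∧
  (∀ r ∈ T, ∀ y, r.op = Op.release y → ∃ a, IsCS T y a r) ∧
  (∀ a₁ ∈ T, ∀ a₂ ∈ T, ∀ y, a₁.op = Op.acquire y → a₂.op = Op.acquire y →
    tracePos T a₁ < tracePos T a₂ →
    ∃ rl ∈ T, rl.op = Op.release y ∧ rl.tid = a₁.tid ∧
      tracePos T a₁ < tracePos T rl ∧ tracePos T rl < tracePos T a₂)

/-- `T'` is a correctly reordered prefix of `T`. -/
structure CorrectlyReorderedPrefix (T T' : List Event) : Prop where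
  nodup : T'.Nodup
  sub : ∀ e ∈ T', e ∈ T
  programOrder : ∀ i : ℕ,
    (T'.filter (fun e => e.tid = i)) <+: (T.filter (fun e => e.tid = i))
  lastWriter : ∀ r ∈ T', ∀ w, LastWriteOf T w r → w ∈ T' ∧ LastWriteOf T' w r
  lockSemantics : ∀ a₁ ∈ T', ∀ a₂ ∈ T', ∀ y,
    a₁.op = Op.acquire y → a₂.op = Op.acquire y → tracePos T' a₁ < tracePos T' a₂ →
    ∃ rl ∈ T', rl.op = Op.release y ∧ rl.tid = a₁.tid ∧
      tracePos T' a₁ < tracePos T' rl ∧ tracePos T' rl < tracePos T' a₂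

/-- `(e, f)` is a predictable race pair: `e` and `f` conflict and some correctly
reordered prefix of `T` has `e` immediately before `f`. -/
def RacePair (T : List Event) (e f : Event) : Prop :=
  Conflict e f ∧
  ∃ T', CorrectlyReorderedPrefix T T' ∧ ∃ l₁ l₂, T' = l₁ ++ e :: f :: l₂

/-- The PWR relation: smallest partial order closed under program order (PO),
write-read dependency (WRD) and release-order dependency (ROD). -/
inductive PWR (T : List Event) : Event → Event → Prop
  | po {e f : Event} : e ∈ T → f ∈ T → e.tid = f.tid →
      tracePos T e < tracePos T f → PWR T e f
  | wrd {w r : Event} : LastWriteOf T w r → PWR T w r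
  | rod {y : ℕ} {a rl a' rl' e f : Event} :
      InCS T y a rl e → InCS T y a' rl' f → a ≠ a' → PWR T e f → PWR T rl f
  | trans {e f g : Event} : PWR T e f → PWR T f g → PWR T e g

open Classical

/-- One step of the first pass of the PWR algorithm for variable `x`.
The state is `(RW(x), E(x), Conc(x))`. -/
noncomputable def stepRW (T : List Event) (x : ℕ)
    (st : List Event × List (Event × Event) × List (Event × Event)) (f : Event) :
    List Event × List (Event × Event) × List (Event × Event) :=
  if f.accesses x then
    (f :: st.1.filter (fun g => !decide (PWR T g f)),
     st.2.1 ++ (st.1.filter (fun g => decide (PWR T g f))).map (fun g => (g, f)),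
     st.2.2 ++ (st.1.filter
       (fun g => !decide (PWR T g f) && !decide (PWR T f g))).map (fun g => (g, f)))
  else st

/-- The first pass of the PWR algorithm: fold over the trace. -/
noncomputable def firstPass (T : List Event) (x : ℕ) :
    List Event × List (Event × Event) × List (Event × Event) :=
  T.foldl (stepRW T x) ([], [], [])

/-- The edge constraints `E(x)` produced by the first pass. -/
noncomputable def edgesOf (T : List Event) (x : ℕ) : List (Event × Event) :=
  (firstPass T x).2.1

/-- The concurrent pairs `Conc(x)` produced by the first pass. -/
noncomputable def concOf (T : List Event) (x : ℕ) : List (Event × Event) :=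
  (firstPass T x).2.2

section Aux

lemma pos_inj {T : List Event} (hnd : T.Nodup) {a b : Event}
    (ha : a ∈ T) (hb : b ∈ T) (h : tracePos T a = tracePos T b) : a = b :=
  (List.idxOf_inj ha).1 h

lemma pwr_forward {T : List Event} (hT : WellFormed T) {e f : Event}
    (h : PWR T e f) : tracePos T e < tracePos T f := by
  induction h with
  | po _ _ _ h4 => exact h4
  | wrd h => obtain ⟨_, _, x, _, _, h1, _⟩ := h; exact h1
  | rod hcs1 hcs2 hne _ ih =>
    rename_i y a rl a' rl' e' f' hpwr
    obtain ⟨⟨haT, hrlT, hopa, hoprl, _, hlt, hsep⟩, heT, _, hae, herl⟩ := hcs1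
    obtain ⟨⟨haT', hrlT', hopa', hoprl', _, hlt', hsep'⟩, hfT, _, haf, hfrl⟩ := hcs2
    rcases lt_trichotomy (tracePos T a) (tracePos T a') with hlt2 | heq | hgt
    · -- CS of a entirely before a'
      have hno := hsep a' haT' (Or.inl hopa')
      push_neg at hno
      have hle : tracePos T rl ≤ tracePos T a' := hno hlt2
      have hne2 : rl ≠ a' := by
        intro h; rw [h] at hoprl; rw [hoprl] at hopa'; cases hopa'
      have : tracePos T rl < tracePos T a' :=
        lt_of_le_of_ne hle (fun h => hne2 (pos_inj hT.1 hrlT haT' h))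
      exact lt_of_lt_of_le this haf
    · exact absurd (pos_inj hT.1 haT haT' heq) hne
    · -- CS of a' entirely before a, contradicting ih
      have hno := hsep' a haT (Or.inl hopa)
      push_neg at hno
      have hle : tracePos T rl' ≤ tracePos T a := hno hgt
      have : tracePos T f' ≤ tracePos T e' :=
        le_trans hfrl (le_trans hle hae)
      omega
  | trans _ _ ih1 ih2 => exact lt_trans ih1 ih2

variable (T : List Event) (x : ℕ)

lemma foldl_E_mono : ∀ (l : List Event) (st : List Event × List (Event × Event) × List (Event × Event))
    {p : Event × Event}, p ∈ st.2.1 → p ∈ (l.foldl (stepRW T x) st).2.1 := by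
  intro l
  induction l with
  | nil => intro st p hp; exact hp
  | cons a l ih =>
    intro st p hp
    refine ih _ ?_
    unfold stepRW
    split_ifs
    · exact List.mem_append_left _ hp
    · exact hp

lemma foldl_C_mono : ∀ (l : List Event) (st : List Event × List (Event × Event) × List (Event × Event))
    {p : Event × Event}, p ∈ st.2.2 → p ∈ (l.foldl (stepRW T x) st).2.2 := by
  intro l
  induction l with
  | nil => intro st p hp; exact hp
  | cons a l ih =>
    intro st p hp
    refine ih _ ?_
    unfold stepRW
    split_ifs
    · exact List.mem_append_left _ hp
    · exact hp

lemma foldl_RW_mem : ∀ (l : List Event) (st : List Event × List (Event × Event) × List (Event × Event))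
    {g : Event}, g ∈ (l.foldl (stepRW T x) st).1 → g ∈ st.1 ∨ g ∈ l := by
  intro l
  induction l with
  | nil => intro st g hg; exact Or.inl hg
  | cons a l ih =>
    intro st g hg
    rcases ih _ hg with h | h
    · unfold stepRW at h
      split_ifs at h
      · rcases List.mem_cons.1 h with h | h
        · exact Or.inr (h ▸ List.mem_cons_self)
        · exact Or.inl (List.mem_of_mem_filter h)
      · exact Or.inl h
    · exact Or.inr (List.mem_cons_of_mem _ h)

lemma foldl_E_pwr : ∀ (l : List Event) (st : List Event × List (Event × Event) × List (Event × Event))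
    {g h : Event}, (g, h) ∈ (l.foldl (stepRW T x) st).2.1 → (g, h) ∈ st.2.1 ∨ PWR T g h := by
  intro l
  induction l with
  | nil => intro st g h hg; exact Or.inl hg
  | cons a l ih =>
    intro st g h hg
    rcases ih _ hg with hmem | hp
    · unfold stepRW at hmem
      split_ifs at hmem
      · rcases List.mem_append.1 hmem with h1 | h1
        · exact Or.inl h1
        · obtain ⟨g', hg', heq⟩ := List.mem_map.1 h1
          simp only [Prod.mk.injEq] at heq
          obtain ⟨rfl, rfl⟩ := heq
          exact Or.inr (of_decide_eq_true (List.mem_filter.1 hg').2)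
      · exact Or.inl hmem
    · exact Or.inr hp

lemma step_Q {st : List Event × List (Event × Event) × List (Event × Event)} {e : Event} (h : Event)
    (hQ : ∃ gs : List Event, List.Chain' (fun g h' => (g, h') ∈ st.2.1) (e :: gs) ∧
      (e :: gs).getLast (List.cons_ne_nil _ _) ∈ st.1) :
    ∃ gs : List Event,
      List.Chain' (fun g h' => (g, h') ∈ (stepRW T x st h).2.1) (e :: gs) ∧
      (e :: gs).getLast (List.cons_ne_nil _ _) ∈ (stepRW T x st h).1 := by
  obtain ⟨gs, hch, hlast⟩ := hQ
  by_cases hacc : h.accesses x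
  · set gn := (e :: gs).getLast (List.cons_ne_nil _ _) with hgn
    by_cases hp : PWR T gn h
    · refine ⟨gs ++ [h], ?_, ?_⟩
      · rw [show e :: (gs ++ [h]) = (e :: gs) ++ [h] by simp]
        rw [List.Chain', List.isChain_append]
        refine ⟨hch.imp (fun a b hab => ?_), List.isChain_singleton _, ?_⟩
        · simp only [stepRW, if_pos hacc]
          exact List.mem_append_left _ hab
        · intro y hy z hz
          rw [List.getLast?_eq_getLast (List.cons_ne_nil _ _)] at hy
          simp only [List.head?] at hz
          obtain rfl := Option.some_injective _ hy
          obtain rfl := Option.some_injective _ hz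
          simp only [stepRW, if_pos hacc]
          refine List.mem_append_right _ (List.mem_map.2 ⟨gn, ?_, rfl⟩)
          exact List.mem_filter.2 ⟨hlast, decide_eq_true hp⟩
      · have : (e :: (gs ++ [h])).getLast (List.cons_ne_nil _ _) = h := by
          rw [List.getLast_cons (by simp), List.getLast_append]
          simp
        rw [this]
        simp only [stepRW, if_pos hacc]
        exact List.mem_cons_self
    · refine ⟨gs, hch.imp (fun a b hab => ?_), ?_⟩
      · simp only [stepRW, if_pos hacc]
        exact List.mem_append_left _ hab
      · simp only [stepRW, if_pos hacc]
        refine List.mem_cons_of_mem _ (List.mem_filter.2 ⟨hlast, ?_⟩)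
        simp; exact hp
  · simpa only [stepRW, if_neg hacc] using ⟨gs, hch, hlast⟩

lemma foldl_Q : ∀ (l : List Event) (st : List Event × List (Event × Event) × List (Event × Event))
    (e : Event), e.accesses x →
    (e ∈ l ∨ ∃ gs : List Event, List.Chain' (fun g h' => (g, h') ∈ st.2.1) (e :: gs) ∧
      (e :: gs).getLast (List.cons_ne_nil _ _) ∈ st.1) →
    ∃ gs : List Event,
      List.Chain' (fun g h' => (g, h') ∈ (l.foldl (stepRW T x) st).2.1) (e :: gs) ∧
      (e :: gs).getLast (List.cons_ne_nil _ _) ∈ (l.foldl (stepRW T x) st).1 := by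
  intro l
  induction l with
  | nil => intro st e _ h; exact h.resolve_left (by simp)
  | cons a l ih =>
    intro st e hacc h
    rcases h with h | h
    · rcases List.mem_cons.1 h with rfl | h
      · refine ih _ e hacc (Or.inr ⟨[], List.isChain_singleton _, ?_⟩)
        simp only [stepRW, if_pos hacc, List.getLast_singleton]
        exact List.mem_cons_self
      · exact ih _ e hacc (Or.inl h)
    · exact ih _ e hacc (Or.inr (step_Q T x a h))

lemma chain'_trans_last {R : Event → Event → Prop} (htr : Transitive R) :
    ∀ (gs : List Event) (e : Event), List.Chain' R (e :: gs) →
      gs = [] ∨ R e ((e :: gs).getLast (List.cons_ne_nil _ _)) := by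
  intro gs
  induction gs with
  | nil => intro e _; exact Or.inl rfl
  | cons a gs ih =>
    intro e hch
    rw [List.Chain', List.isChain_cons_cons] at hch
    right
    rw [List.getLast_cons (List.cons_ne_nil _ _)]
    rcases ih a hch.2 with h | h
    · subst h; simpa using hch.1
    · exact htr hch.1 h

end Aux

/-- Reachability of all concurrent pairs via edge constraints: a PWR-concurrent
conflicting pair `(e, f)` on `x` missing from `Conc(x)` is reachable from some
pair `(gₙ, f) ∈ Conc(x)` by following edge constraints `e ≺ g₁ ≺ ⋯ ≺ gₙ`. -/

theorem stmt14 (T : List Event) (x : ℕ) (e f : Event)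
    (hT : WellFormed T) (he : e ∈ T) (hf : f ∈ T)
    (hconf : Conflict e f) (hex : e.accesses x) (hfx : f.accesses x)
    (hpos : tracePos T e < tracePos T f)
    (h₁ : ¬ PWR T e f) (h₂ : ¬ PWR T f e)
    (hnot : (e, f) ∉ concOf T x) :
    ∃ gs : List Event, gs ≠ [] ∧
      List.Chain' (fun g h => (g, h) ∈ edgesOf T x) (e :: gs) ∧
      ∃ gn, gs.getLast? = some gn ∧ (gn, f) ∈ concOf T x := by
  classical
  have hnd := hT.1
  set k := tracePos T f with hk
  have hkl : k < T.length := List.idxOf_lt_length_iff.2 hf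
  have hTk : T[k] = f := List.getElem_idxOf hkl
  have hsplit : T = T.take k ++ f :: T.drop (k + 1) := by
    conv_lhs => rw [← List.take_append_drop k T]
    congr 1
    rw [← List.getElem_cons_drop hkl, hTk]
  have heT1 : e ∈ T.take k := by
    have hel : tracePos T e < T.length := List.idxOf_lt_length_iff.2 he
    have hiel : tracePos T e < (T.take k).length := by
      rw [List.length_take]; exact lt_min hpos hel
    have : (T.take k)[tracePos T e] = e := by
      rw [List.getElem_take]; exact List.getElem_idxOf hel
    exact this ▸ List.getElem_mem hiel
  have hposlt : ∀ g ∈ T.take k, tracePos T g < k := by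
    intro g hg
    obtain ⟨i, hi, hgi⟩ := List.mem_iff_getElem.1 hg
    have hik : i < k := lt_of_lt_of_le hi (by rw [List.length_take]; exact min_le_left _ _)
    have hil : i < T.length := lt_trans hik hkl
    have hTi : T[i] = g := by rw [← hgi, List.getElem_take]
    have : tracePos T g = i := by
      rw [← hTi]; exact hnd.idxOf_getElem i hil
    omega
  set st₁ := (T.take k).foldl (stepRW T x) ([], [], []) with hst₁
  obtain ⟨gs, hch, hlast⟩ := foldl_Q T x (T.take k) ([], [], []) e hex (Or.inl heT1)
  set gn := (e :: gs).getLast (List.cons_ne_nil _ _) with hgn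
  have hgnT1 : gn ∈ T.take k := (foldl_RW_mem T x _ _ hlast).resolve_left (by simp)
  have hgnpos : tracePos T gn < k := hposlt gn hgnT1
  have hEpwr : ∀ a b : Event, (a, b) ∈ st₁.2.1 → PWR T a b := fun a b hab =>
    (foldl_E_pwr T x _ _ hab).resolve_left (by simp)
  have hchPWR : List.Chain' (PWR T) (e :: gs) := hch.imp (fun a b => hEpwr a b)
  have hFP : firstPass T x = (T.drop (k + 1)).foldl (stepRW T x) (stepRW T x st₁ f) := by
    have h0 : T.foldl (stepRW T x) ([], [], []) =
        (T.take k ++ f :: T.drop (k + 1)).foldl (stepRW T x) ([], [], []) := by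
      conv_rhs => rw [← hsplit]
    rw [firstPass, h0, List.foldl_append, List.foldl_cons, hst₁]
  by_cases hfg : PWR T f gn
  · have := pwr_forward hT hfg
    omega
  by_cases hgf : PWR T gn f
  · exfalso
    rcases chain'_trans_last (R := PWR T) (fun _ _ _ h1 h2 => PWR.trans h1 h2) gs e hchPWR with hnil | hrel
    · have hge : gn = e := by rw [hgn, hnil, List.getLast_singleton]
      exact h₁ (hge ▸ hgf)
    · exact h₁ (PWR.trans hrel hgf)
  have hconc : (gn, f) ∈ (stepRW T x st₁ f).2.2 := by
    simp only [stepRW, if_pos hfx]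
    refine List.mem_append_right _ (List.mem_map.2 ⟨gn, List.mem_filter.2 ⟨hlast, ?_⟩, rfl⟩)
    simp [hgf, hfg]
  have hconcOf : (gn, f) ∈ concOf T x := by
    rw [concOf, hFP]
    exact foldl_C_mono T x _ _ hconc
  have hgsne : gs ≠ [] := by
    intro hnil
    apply hnot
    have hge : gn = e := by rw [hgn, hnil, List.getLast_singleton]
    exact hge ▸ hconcOf
  refine ⟨gs, hgsne, hch.imp (fun a b hab => ?_), gn, ?_, hconcOf⟩
  · have h1 : (a, b) ∈ (stepRW T x st₁ f).2.1 := by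
      simp only [stepRW, if_pos hfx]
      exact List.mem_append_left _ hab
    rw [edgesOf, hFP]
    exact foldl_E_mono T x _ _ h1
  · rw [List.getLast?_eq_getLast hgsne]
    congr 1
    rw [hgn, List.getLast_cons hgsne]
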